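/- arXiv:1102.2767 — 9 statements merged into one kernel-verified Lean document; each statement's English description precedes it below -/
import Mathlib

section
/- For every real σ and every real t ≠ 0, |1 + 2^(σ+it) + 3^(σ+it)| < 1 + 2^σ + 3^σ, where powers are complex powers m^s = exp(s·log m). -/
/-!
The triangle inequality in `ℂ` is strict unless the summands lie on a common ray. If both
`2 ^ s` and `3 ^ s` (with `s = σ + t i`) were on the ray of `1`, then `t log 2 = 2πk` and
`t log 3 = 2πn` for integers `k, n`, hence `n log 2 = k log 3`, i.e. `2 ^ |n| = 3 ^ |k|`, which
forces `n = 0` by coprimality and then `t = 0`.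
-/

open Complex Real

theorem norm_add_add_lt_of_not_sameRay {E : Type*} [NormedAddCommGroup E] [NormedSpace ℝ E]
    [StrictConvexSpace ℝ E] {x y z : E} (h : ¬SameRay ℝ x y ∨ ¬SameRay ℝ x z) :
    ‖x + y + z‖ < ‖x‖ + ‖y‖ + ‖z‖ := by
  rcases h with hy | hz
  · calc ‖x + y + z‖ ≤ ‖x + y‖ + ‖z‖ := norm_add_le _ _
      _ < ‖x‖ + ‖y‖ + ‖z‖ := by gcongr; exact norm_add_lt_of_not_sameRay hy
  · calc ‖x + y + z‖ = ‖x + z + y‖ := by rw [add_right_comm]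
      _ ≤ ‖x + z‖ + ‖y‖ := norm_add_le _ _
      _ < ‖x‖ + ‖y‖ + ‖z‖ := by linarith [norm_add_lt_of_not_sameRay hz]

theorem Nat.Coprime.eq_zero_of_pow_eq_pow {a b m n : ℕ} (hab : a.Coprime b) (ha : 1 < a)
    (h : a ^ m = b ^ n) : m = 0 :=
  (Nat.pow_eq_one.1 ((hab.pow m n).eq_one_of_dvd (h ▸ dvd_rfl))).resolve_left ha.ne'

theorem Nat.Coprime.eq_zero_of_intCast_mul_log_eq {a b : ℕ} (hab : a.Coprime b) (ha : 1 < a)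
    {m n : ℤ} (h : m * Real.log a = n * Real.log b) : m = 0 := by
  have hb : 0 < b := Nat.pos_of_ne_zero fun hb ↦ by simp [hb] at hab; omega
  have habs : (m.natAbs : ℝ) * Real.log a = n.natAbs * Real.log b := by
    have hloga : 0 ≤ Real.log a := Real.log_nonneg (by exact_mod_cast ha.le)
    have hlogb : 0 ≤ Real.log b := Real.log_nonneg (by exact_mod_cast hb)
    simpa [abs_mul, abs_of_nonneg hloga, abs_of_nonneg hlogb] using congrArg abs h
  rw [← Real.log_pow, ← Real.log_pow] at habs
  have hpow : a ^ m.natAbs = b ^ n.natAbs := by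
    exact_mod_cast Real.log_injOn_pos (by simp; positivity) (by simp; positivity) habs
  exact Int.natAbs_eq_zero.1 (hab.eq_zero_of_pow_eq_pow ha hpow)

theorem Complex.ofReal_cpow_add_mul_I {x : ℝ} (hx : 0 < x) (σ t : ℝ) :
    (x : ℂ) ^ ((σ : ℂ) + t * I) = (x ^ σ : ℝ) • exp ((t * Real.log x : ℝ) * I) := by
  have hx' : (x : ℂ) ≠ 0 := by exact_mod_cast hx.ne'
  rw [cpow_add _ _ hx', ← ofReal_cpow hx.le, cpow_def_of_ne_zero hx', ← ofReal_log hx.le,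
    real_smul]
  push_cast
  ring_nf

theorem Complex.exists_int_of_sameRay_one_cpow {x : ℝ} (hx : 0 < x) {σ t : ℝ}
    (h : SameRay ℝ 1 ((x : ℂ) ^ ((σ : ℂ) + t * I))) : ∃ k : ℤ, t * Real.log x = k * (2 * π) := by
  rw [ofReal_cpow_add_mul_I hx] at h
  have hexp : exp ((t * Real.log x : ℝ) * I) = 1 := by
    have := h.pos_smul_right (inv_pos.2 (rpow_pos_of_pos hx σ))
    rw [inv_smul_smul₀ (rpow_pos_of_pos hx σ).ne'] at this
    exact (this.eq_of_norm_eq (by rw [norm_one, norm_exp_ofReal_mul_I])).symm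
  obtain ⟨k, hk⟩ := exp_eq_one_iff.1 hexp
  refine ⟨k, ?_⟩
  simpa using congrArg im hk

theorem not_sameRay_one_two_cpow_or_three_cpow {σ t : ℝ} (ht : t ≠ 0) :
    ¬SameRay ℝ 1 ((2 : ℂ) ^ ((σ : ℂ) + t * I)) ∨ ¬SameRay ℝ 1 ((3 : ℂ) ^ ((σ : ℂ) + t * I)) := by
  rw [← not_and_or]
  rintro ⟨h2, h3⟩
  obtain ⟨k, hk⟩ := exists_int_of_sameRay_one_cpow two_pos (by exact_mod_cast h2)
  obtain ⟨n, hn⟩ := exists_int_of_sameRay_one_cpow three_pos (by exact_mod_cast h3)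
  have hlog : (n : ℝ) * Real.log (2 : ℕ) = k * Real.log (3 : ℕ) := by
    have : t * (n * Real.log 2 - k * Real.log 3) = 0 := by linear_combination n * hk - k * hn
    simpa [ht, sub_eq_zero] using this
  have hn0 := (by decide : Nat.Coprime 2 3).eq_zero_of_intCast_mul_log_eq one_lt_two hlog
  norm_num [hn0, ht] at hn

open Complex in
theorem stmt_2 (σ t : ℝ) (ht : t ≠ 0) :
    ‖1 + (2 : ℂ) ^ ((σ : ℂ) + t * I) + (3 : ℂ) ^ ((σ : ℂ) + t * I)‖
      < 1 + (2 : ℝ) ^ σ + (3 : ℝ) ^ σ := by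
  have hnorm {x : ℝ} (hx : 0 < x) : ‖(x : ℂ) ^ ((σ : ℂ) + t * I)‖ = x ^ σ := by
    simp [norm_cpow_eq_rpow_re_of_pos hx]
  have h2 : ‖(2 : ℂ) ^ ((σ : ℂ) + t * I)‖ = 2 ^ σ := by exact_mod_cast hnorm two_pos
  have h3 : ‖(3 : ℂ) ^ ((σ : ℂ) + t * I)‖ = 3 ^ σ := by exact_mod_cast hnorm three_pos
  simpa [h2, h3] using
    norm_add_add_lt_of_not_sameRay (not_sameRay_one_two_cpow_or_three_cpow (σ := σ) ht)
end

section
/- For n > 2 and real σ, if s = σ + it with t ≠ 0, then |G_n(s)| < G_n(σ); i.e., the maximum of |G_n| on the half-plane Re s ≤ σ is attained only at the real point s = σ. -/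
/-!
By the triangle inequality `‖G_n(σ + it)‖ ≤ G_n(σ)`, and since the plane is strictly convex,
equality would force every term `m^(σ+it)` onto the ray of `1^(σ+it) = 1`, i.e. `m^(it) = 1`.
For `m = 2, 3` this gives `t log 2, t log 3 ∈ 2πℤ`, so `k log 3 = j log 2` for integers `k, j`
with `k ≠ 0` when `t ≠ 0`; exponentiating, `3^|k| = 2^|j|`, which coprimality rules out.
-/

open Complex Real Finset

theorem norm_sum_lt_sum_norm_of_not_sameRay {ι E : Type*} [NormedAddCommGroup E] [NormedSpace ℝ E]
    [StrictConvexSpace ℝ E] {s : Finset ι} {f : ι → E} {i j : ι} (hi : i ∈ s) (hj : j ∈ s)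
    (h : ¬SameRay ℝ (f i) (f j)) : ‖∑ k ∈ s, f k‖ < ∑ k ∈ s, ‖f k‖ := by
  classical
  have hij : i ≠ j := by rintro rfl; exact h SameRay.rfl
  have hsub : {i, j} ⊆ s := insert_subset hi (singleton_subset_iff.mpr hj)
  calc ‖∑ k ∈ s, f k‖ = ‖(f i + f j) + ∑ k ∈ s \ {i, j}, f k‖ := by
        rw [← sum_pair hij, add_comm, sum_sdiff hsub]
    _ ≤ ‖f i + f j‖ + ∑ k ∈ s \ {i, j}, ‖f k‖ := norm_add_le_of_le le_rfl (norm_sum_le _ _)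
    _ < ‖f i‖ + ‖f j‖ + ∑ k ∈ s \ {i, j}, ‖f k‖ := by gcongr; exact norm_add_lt_of_not_sameRay h
    _ = ∑ k ∈ s, ‖f k‖ := by rw [← sum_pair hij (f := fun k ↦ ‖f k‖), add_comm, sum_sdiff hsub]

theorem exists_int_of_sameRay_one_natCast_cpow {p : ℕ} (hp : 0 < p) {σ t : ℝ}
    (h : SameRay ℝ 1 ((p : ℂ) ^ ((σ : ℂ) + t * I))) : ∃ k : ℤ, t * Real.log p = 2 * π * k := by
  have hp0 : (p : ℂ) ≠ 0 := by exact_mod_cast hp.ne'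
  have hσ : (p : ℂ) ^ (σ : ℂ) = ((p : ℝ) ^ σ : ℝ) := by
    rw [ofReal_cpow (Nat.cast_nonneg p), ofReal_natCast]
  have hσ0 : (((p : ℝ) ^ σ : ℝ) : ℂ) ≠ 0 := ofReal_ne_zero.mpr (by positivity)
  have hunit : (p : ℂ) ^ ((t : ℂ) * I) = 1 := by
    have := h.norm_smul_eq
    rw [norm_one, one_smul, norm_natCast_cpow_of_pos hp, cpow_add _ _ hp0, hσ] at this
    simpa [Complex.real_smul, hσ0] using this
  obtain ⟨k, hk⟩ := exp_eq_one_iff.mp (cpow_def_of_ne_zero hp0 _ ▸ hunit)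
  refine ⟨k, ?_⟩
  have := congrArg im hk
  simpa [log_re, mul_comm] using this

theorem Nat.Coprime.eq_zero_of_pow_eq_pow_s4 {p q a b : ℕ} (h : p.Coprime q) (hp : 1 < p)
    (hpq : p ^ a = q ^ b) : a = 0 := by
  have := Nat.Coprime.pow a b h
  rw [hpq, Nat.coprime_self, ← hpq, Nat.pow_eq_one] at this
  exact this.resolve_left hp.ne'

theorem Nat.Coprime.eq_zero_of_int_mul_log_eq {p q : ℕ} (h : p.Coprime q) (hp : 1 < p)
    (hq : 1 < q) {k j : ℤ} (hkj : k * Real.log p = j * Real.log q) : k = 0 := by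
  have hlogp : 0 < Real.log p := Real.log_pos (by exact_mod_cast hp)
  have hlogq : 0 < Real.log q := Real.log_pos (by exact_mod_cast hq)
  have habs : Real.log ((p : ℝ) ^ k.natAbs) = Real.log ((q : ℝ) ^ j.natAbs) := by
    rw [Real.log_pow, Real.log_pow, Nat.cast_natAbs, Nat.cast_natAbs, Int.cast_abs, Int.cast_abs,
      ← abs_of_pos hlogp, ← abs_of_pos hlogq, ← abs_mul, ← abs_mul, hkj]
  have hpow : p ^ k.natAbs = q ^ j.natAbs := by
    exact_mod_cast Real.log_injOn_pos (by simp; positivity) (by simp; positivity) habs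
  exact Int.natAbs_eq_zero.mp (h.eq_zero_of_pow_eq_pow_s4 hp hpow)

theorem eq_zero_of_sameRay_one_natCast_cpow {p q : ℕ} (hpq : p.Coprime q) (hp : 1 < p)
    (hq : 1 < q) {σ t : ℝ} (hp' : SameRay ℝ 1 ((p : ℂ) ^ ((σ : ℂ) + t * I)))
    (hq' : SameRay ℝ 1 ((q : ℂ) ^ ((σ : ℂ) + t * I))) : t = 0 := by
  obtain ⟨k, hk⟩ := exists_int_of_sameRay_one_natCast_cpow (by omega) hp'
  obtain ⟨j, hj⟩ := exists_int_of_sameRay_one_natCast_cpow (by omega) hq'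
  have hkj : k * Real.log q = j * Real.log p := by
    have : 2 * π * (k * Real.log q) = 2 * π * (j * Real.log p) := by
      linear_combination Real.log p * hj - Real.log q * hk
    exact mul_left_cancel₀ (by positivity) this
  have hk0 := hpq.symm.eq_zero_of_int_mul_log_eq hq hp hkj
  rw [hk0, Int.cast_zero, mul_zero] at hk
  exact (mul_eq_zero.mp hk).resolve_right (Real.log_pos (by exact_mod_cast hp)).ne'

open Complex in
theorem stmt_4 (n : ℕ) (hn : 2 < n) (σ t : ℝ) (ht : t ≠ 0) :
    ‖∑ m ∈ Finset.Icc 1 n, (m : ℂ) ^ ((σ : ℂ) + t * I)‖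
      < ∑ m ∈ Finset.Icc 1 n, (m : ℝ) ^ σ := by
  have hnorm : ∀ m ∈ Icc 1 n, ‖(m : ℂ) ^ ((σ : ℂ) + t * I)‖ = (m : ℝ) ^ σ := fun m hm ↦ by
    simp [norm_natCast_cpow_of_pos (mem_Icc.mp hm).1]
  rw [← sum_congr rfl hnorm]
  have hmem : ∀ m, 1 ≤ m → m ≤ 3 → m ∈ Icc 1 n := fun m h1 h3 ↦ mem_Icc.mpr ⟨h1, by omega⟩
  have hone : ((1 : ℕ) : ℂ) ^ ((σ : ℂ) + t * I) = 1 := by simp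
  by_cases h2 : SameRay ℝ 1 ((2 : ℕ) ^ ((σ : ℂ) + t * I) : ℂ)
  · refine norm_sum_lt_sum_norm_of_not_sameRay (hmem 1 le_rfl (by norm_num))
      (hmem 3 (by norm_num) le_rfl) ?_
    rw [hone]
    exact fun h3 ↦ ht <| eq_zero_of_sameRay_one_natCast_cpow (by norm_num) (by norm_num)
      (by norm_num) h2 h3
  · refine norm_sum_lt_sum_norm_of_not_sameRay (hmem 1 le_rfl (by norm_num))
      (hmem 2 (by norm_num) (by norm_num)) ?_
    rwa [hone]
end

section
/- Define x_{n,1} := sup{σ ∈ ℝ : 1 + 2^σ + ... + (n-1)^σ ≥ n^σ} for n > 2. If w = a + ib is a zero of G_n(s) = 1 + 2^s + ... + n^s, then a ≤ x_{n,1}. -/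
/-!
Write `S = ∑_{m<n} m^s`. At a zero `w` of `G_n` we have `n^w = -S(w)`, so taking absolute values
`n^{Re w} ≤ ∑_{m<n} m^{Re w}`: the real part `Re w` lies in the set whose supremum is `x_{n,1}`.
That set is bounded above because `∑_{m<n} (m/n)^σ → 0` as `σ → ∞`.
-/

open Finset Filter Topology

theorem rpow_re_le_sum_rpow_re_of_sum_add_cpow_eq_zero {N : ℕ} (hN : 0 < N) {s : Finset ℕ}
    (hs : ∀ m ∈ s, 0 < m) {w : ℂ} (h : ∑ m ∈ s, (m : ℂ) ^ w + (N : ℂ) ^ w = 0) :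
    (N : ℝ) ^ w.re ≤ ∑ m ∈ s, (m : ℝ) ^ w.re :=
  calc (N : ℝ) ^ w.re = ‖(N : ℂ) ^ w‖ := (Complex.norm_natCast_cpow_of_pos hN w).symm
    _ = ‖∑ m ∈ s, (m : ℂ) ^ w‖ := by rw [eq_neg_of_add_eq_zero_right h, norm_neg]
    _ ≤ ∑ m ∈ s, ‖(m : ℂ) ^ w‖ := norm_sum_le _ _
    _ = ∑ m ∈ s, (m : ℝ) ^ w.re :=
      sum_congr rfl fun m hm ↦ Complex.norm_natCast_cpow_of_pos (hs m hm) w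

theorem bddAbove_setOf_rpow_le_sum_rpow {ι : Type*} (s : Finset ι) (a : ι → ℝ) {x : ℝ}
    (hx : 0 < x) (ha : ∀ i ∈ s, 0 ≤ a i ∧ a i < x) :
    BddAbove {σ : ℝ | x ^ σ ≤ ∑ i ∈ s, a i ^ σ} := by
  have htend : Tendsto (fun σ : ℝ ↦ ∑ i ∈ s, (a i / x) ^ σ) atTop (𝓝 0) := by
    simpa using tendsto_finsetSum s fun i hi ↦ tendsto_rpow_atTop_of_base_lt_one _
      (by linarith [div_nonneg (ha i hi).1 hx.le]) ((div_lt_one hx).2 (ha i hi).2)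
  obtain ⟨σ₀, hσ₀⟩ := eventually_atTop.1 (htend.eventually (gt_mem_nhds one_pos))
  refine ⟨σ₀, fun σ hσ ↦ le_of_not_gt fun hlt ↦ ?_⟩
  have hfactor : ∑ i ∈ s, a i ^ σ = x ^ σ * ∑ i ∈ s, (a i / x) ^ σ := by
    rw [mul_sum]
    refine sum_congr rfl fun i hi ↦ ?_
    rw [Real.div_rpow (ha i hi).1 hx.le, mul_div_cancel₀ _ (Real.rpow_pos_of_pos hx σ).ne']
  have hσ' : x ^ σ ≤ x ^ σ * ∑ i ∈ s, (a i / x) ^ σ := hfactor ▸ hσ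
  nlinarith [hσ₀ σ hlt.le, Real.rpow_pos_of_pos hx σ]

theorem stmt_7 (n : ℕ) (hn : 2 < n) (w : ℂ)
    (hw : (∑ m ∈ Finset.Icc 1 n, (m : ℂ) ^ w) = 0) :
    w.re ≤ sSup {σ : ℝ | (n : ℝ) ^ σ ≤ ∑ m ∈ Finset.Icc 1 (n - 1), (m : ℝ) ^ σ} := by
  have hsplit : ∑ m ∈ Icc 1 n, (m : ℂ) ^ w = ∑ m ∈ Icc 1 (n - 1), (m : ℂ) ^ w + (n : ℂ) ^ w := by
    obtain ⟨k, rfl⟩ : ∃ k, n = k + 1 := ⟨n - 1, by omega⟩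
    simpa using sum_Icc_succ_top (by omega : 1 ≤ k + 1) fun m : ℕ ↦ (m : ℂ) ^ w
  refine le_csSup (bddAbove_setOf_rpow_le_sum_rpow _ (fun m : ℕ ↦ (m : ℝ)) (by positivity)
    fun m hm ↦ ⟨m.cast_nonneg, ?_⟩) ?_
  · exact_mod_cast (show m < n by have := (mem_Icc.1 hm).2; omega)
  · exact rpow_re_le_sum_rpow_re_of_sum_add_cpow_eq_zero (by omega)
      (fun m hm ↦ (mem_Icc.1 hm).1) (hsplit ▸ hw)
end

section
/- For every integer n > 2, every real σ with x_{n,0} ≤ σ ≤ x_{n,1}, and every j with 1 ≤ j ≤ n, the inequality j^σ ≤ ∑_{k=1, k≠j}^{n} k^σ holds. -/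
/-!
The map `σ ↦ ∑_{m=2}^n m^σ` is continuous, increasing and tends to `0` at `-∞`, so the infimum
`x_{n,0}` is attained and every `σ ≥ x_{n,0}` satisfies `1 ≤ ∑_{m=2}^n m^σ`. Dividing by `n^σ`, the
condition defining `x_{n,1}` becomes `1 ≤ ∑_{m<n} (m/n)^σ`, whose left side is continuous, decreasing
and tends to `0` at `+∞`, so every `σ ≤ x_{n,1}` satisfies `n^σ ≤ ∑_{m<n} m^σ`. These are the cases
`j = 1` and `j = n`; for any other `j`, already the single term `n^σ` (if `σ ≥ 0`) or `1^σ`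
(if `σ < 0`) dominates `j^σ`.
-/

open Finset Filter Topology Real

section SublevelSets

variable {α β : Type*} [ConditionallyCompleteLinearOrder α] [TopologicalSpace α] [OrderTopology α]
  [LinearOrder β] [TopologicalSpace β] [OrderClosedTopology β] {f : α → β} {l c : β} {σ : α}

theorem le_apply_of_csInf_setOf_le (hf : Monotone f) (hcont : Continuous f)
    (hlim : Tendsto f atBot (𝓝 l)) (hlc : l < c) (hne : ∃ x, c ≤ f x)
    (h : sInf {x | c ≤ f x} ≤ σ) : c ≤ f σ := by
  have : Nonempty α := ⟨hne.choose⟩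
  obtain ⟨a, ha⟩ := eventually_atBot.mp (hlim.eventually_lt_const hlc)
  have hbdd : BddBelow {x | c ≤ f x} :=
    ⟨a, fun x hx => le_of_not_gt fun hxa => (ha x hxa.le).not_ge hx⟩
  exact ((isClosed_le continuous_const hcont).csInf_mem hne hbdd).trans (hf h)

theorem le_apply_of_le_csSup_setOf_le (hf : Antitone f) (hcont : Continuous f)
    (hlim : Tendsto f atTop (𝓝 l)) (hlc : l < c) (hne : ∃ x, c ≤ f x)
    (h : σ ≤ sSup {x | c ≤ f x}) : c ≤ f σ := by
  have : Nonempty α := ⟨hne.choose⟩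
  obtain ⟨a, ha⟩ := eventually_atTop.mp (hlim.eventually_lt_const hlc)
  have hbdd : BddAbove {x | c ≤ f x} :=
    ⟨a, fun x hx => le_of_not_gt fun hxa => (ha x hxa.le).not_ge hx⟩
  exact ((isClosed_le continuous_const hcont).csSup_mem hne hbdd).trans (hf h)

end SublevelSets

namespace Real

theorem one_le_sum_Icc_rpow_of_csInf_le {n : ℕ} (hn : 2 ≤ n) {σ : ℝ}
    (h : sInf {x : ℝ | 1 ≤ ∑ m ∈ Icc 2 n, (m : ℝ) ^ x} ≤ σ) :
    1 ≤ ∑ m ∈ Icc 2 n, (m : ℝ) ^ σ := by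
  have one_lt : ∀ m ∈ Icc 2 n, 1 < (m : ℝ) := fun m hm => by exact_mod_cast (mem_Icc.mp hm).1
  refine le_apply_of_csInf_setOf_le
    (f := fun x => ∑ m ∈ Icc 2 n, (m : ℝ) ^ x) (l := 0) ?_ ?_ ?_ one_pos ⟨0, ?_⟩ h
  · exact fun a b hab => sum_le_sum fun m hm => monotone_rpow_of_base_ge_one (one_lt m hm).le hab
  · exact continuous_finsetSum _ fun m hm => continuous_const_rpow (by linarith [one_lt m hm])
  · simpa using tendsto_finsetSum _ fun m hm => tendsto_rpow_atBot_of_base_gt_one _ (one_lt m hm)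
  · simp only [rpow_zero, sum_const, Nat.card_Icc, nsmul_eq_mul, mul_one]
    exact_mod_cast by omega

theorem rpow_le_sum_Icc_rpow_of_le_csSup {n : ℕ} (hn : 2 ≤ n) {σ : ℝ}
    (h : σ ≤ sSup {x : ℝ | (n : ℝ) ^ x ≤ ∑ m ∈ Icc 1 (n - 1), (m : ℝ) ^ x}) :
    (n : ℝ) ^ σ ≤ ∑ m ∈ Icc 1 (n - 1), (m : ℝ) ^ σ := by
  have hn0 : (0 : ℝ) < n := by positivity
  have ratio_mem : ∀ m ∈ Icc 1 (n - 1), 0 < (m : ℝ) / n ∧ (m : ℝ) / n < 1 := fun m hm => by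
    obtain ⟨hm1, hmn⟩ := mem_Icc.mp hm
    refine ⟨by positivity, (div_lt_one hn0).mpr ?_⟩
    exact_mod_cast (by omega : m < n)
  have normalize : ∀ x : ℝ, (n : ℝ) ^ x ≤ ∑ m ∈ Icc 1 (n - 1), (m : ℝ) ^ x ↔
      1 ≤ ∑ m ∈ Icc 1 (n - 1), ((m : ℝ) / n) ^ x := fun x => by
    simp_rw [div_rpow (Nat.cast_nonneg _) hn0.le, ← sum_div]
    rw [le_div_iff₀ (rpow_pos_of_pos hn0 x), one_mul]
  simp_rw [normalize] at h ⊢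
  refine le_apply_of_le_csSup_setOf_le
    (f := fun x => ∑ m ∈ Icc 1 (n - 1), ((m : ℝ) / n) ^ x) (l := 0) ?_ ?_ ?_ one_pos ⟨0, ?_⟩ h
  · exact fun a b hab => sum_le_sum fun m hm =>
      antitone_rpow_of_base_le_one (ratio_mem m hm).1 (ratio_mem m hm).2.le hab
  · exact continuous_finsetSum _ fun m hm => continuous_const_rpow (ratio_mem m hm).1.ne'
  · simpa using tendsto_finsetSum _ fun m hm =>
      tendsto_rpow_atTop_of_base_lt_one _ (by linarith [(ratio_mem m hm).1]) (ratio_mem m hm).2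
  · simp only [rpow_zero, sum_const, Nat.card_Icc, nsmul_eq_mul, mul_one]
    exact_mod_cast by omega

end Real

theorem stmt_10 (n : ℕ) (hn : 2 < n) (σ : ℝ)
    (h₀ : sInf {x : ℝ | 1 ≤ ∑ m ∈ Finset.Icc 2 n, (m : ℝ) ^ x} ≤ σ)
    (h₁ : σ ≤ sSup {x : ℝ | (n : ℝ) ^ x ≤ ∑ m ∈ Finset.Icc 1 (n - 1), (m : ℝ) ^ x})
    (j : ℕ) (hj1 : 1 ≤ j) (hjn : j ≤ n) :
    (j : ℝ) ^ σ ≤ ∑ k ∈ (Finset.Icc 1 n).erase j, (k : ℝ) ^ σ := by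
  have le_sum_of_le_term : ∀ k ∈ (Icc 1 n).erase j, (j : ℝ) ^ σ ≤ (k : ℝ) ^ σ →
      (j : ℝ) ^ σ ≤ ∑ k ∈ (Icc 1 n).erase j, (k : ℝ) ^ σ := fun k hk hjk =>
    hjk.trans (single_le_sum (f := fun k : ℕ => (k : ℝ) ^ σ) (fun _ _ => by positivity) hk)
  rcases le_or_gt 0 σ with hσ | hσ
  · rcases hjn.eq_or_lt with rfl | hjn
    · have : (Icc 1 j).erase j = Icc 1 (j - 1) := by ext; simp only [mem_erase, mem_Icc]; omega
      exact this ▸ rpow_le_sum_Icc_rpow_of_le_csSup hn.le h₁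
    · exact le_sum_of_le_term n (by simp only [mem_erase, mem_Icc]; omega)
        (rpow_le_rpow (by positivity) (by exact_mod_cast hjn.le) hσ)
  · rcases hj1.eq_or_lt with rfl | hj1
    · have : (Icc 1 n).erase 1 = Icc 2 n := by ext; simp only [mem_erase, mem_Icc]; omega
      simpa [this] using one_le_sum_Icc_rpow_of_csInf_le hn.le h₀
    · exact le_sum_of_le_term 1 (by simp only [mem_erase, mem_Icc]; omega)
        (rpow_le_rpow_of_nonpos (by positivity) (by exact_mod_cast hj1.le) hσ.le)
end

section
/- For every σ ∈ [-0.55, 1] there exists a real x₁ such that |1 + 2^σ·e^{i x₁} + 4^σ·e^{2 i x₁}| = 3^σ. -/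
/-!
Put `t = 2^σ`, so `4^σ = t²`. Factoring out `e^{ix}`,
`|1 + t e^{ix} + t² e^{2ix}|² = ((1 + t²) cos x + t)² + (t² - 1)² sin² x`,
which for `cos x = -(1 + t²)/(4t)` (admissible since `1 + t² ≤ 4t` for `t ∈ [1/2, 2]`) equals
`3/4 (t² - 1)²`, while at `x = 0` it is `(1 + t + t²)²`. By the intermediate value theorem every value between
`(√3/2)|t² - 1|` and `1 + t + t²` is attained, and `3^σ` lies in that range for
`σ ∈ [-0.55, 1]`.
-/

open Complex

lemma norm_sq_one_add_mul_exp_add_sq_mul_exp (t x : ℝ) :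
    ‖(1 + (t : ℂ) * exp (x * I) + ((t ^ 2 : ℝ) : ℂ) * exp (2 * x * I) : ℂ)‖ ^ 2
      = ((1 + t ^ 2) * Real.cos x + t) ^ 2 + (t ^ 2 - 1) ^ 2 * Real.sin x ^ 2 := by
  have h2x : 2 * (x : ℂ) * I = ((2 * x : ℝ) : ℂ) * I := by push_cast; ring
  rw [Complex.sq_norm, h2x, exp_mul_I, exp_mul_I, ← ofReal_cos, ← ofReal_sin, ← ofReal_cos,
    ← ofReal_sin, Real.cos_two_mul, Real.sin_two_mul]
  simp only [normSq_apply, add_re, add_im, mul_re, mul_im, ofReal_re, ofReal_im, I_re, I_im,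
    one_re, one_im]
  rw [Real.sin_sq]
  linear_combination (t + 2 * t ^ 2 * Real.cos x) ^ 2 * Real.sin_sq_add_cos_sq x

lemma exists_norm_sq_one_add_mul_exp_add_sq_mul_exp_eq {t : ℝ} (ht : 1 + t ^ 2 ≤ 4 * t) :
    ∃ x : ℝ, ‖(1 + (t : ℂ) * exp (x * I) + ((t ^ 2 : ℝ) : ℂ) * exp (2 * x * I) : ℂ)‖ ^ 2
      = 3 / 4 * (t ^ 2 - 1) ^ 2 := by
  have ht0 : 0 < t := by nlinarith
  have hc : -1 ≤ -(1 + t ^ 2) / (4 * t) ∧ -(1 + t ^ 2) / (4 * t) ≤ 1 := by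
    constructor
    · rw [le_div_iff₀ (by positivity)]; linarith
    · rw [div_le_iff₀ (by positivity)]; nlinarith
  refine ⟨Real.arccos (-(1 + t ^ 2) / (4 * t)), ?_⟩
  rw [norm_sq_one_add_mul_exp_add_sq_mul_exp, Real.sin_sq, Real.cos_arccos hc.1 hc.2]
  field_simp
  ring

lemma exists_norm_one_add_mul_exp_add_sq_mul_exp_eq {t r : ℝ} (ht : 1 + t ^ 2 ≤ 4 * t)
    (hr : 0 ≤ r) (hlo : 3 / 4 * (t ^ 2 - 1) ^ 2 ≤ r ^ 2) (hhi : r ≤ 1 + t + t ^ 2) :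
    ∃ x : ℝ, ‖(1 + (t : ℂ) * exp (x * I) + ((t ^ 2 : ℝ) : ℂ) * exp (2 * x * I) : ℂ)‖ = r := by
  set f : ℝ → ℝ := fun x ↦
    ‖(1 + (t : ℂ) * exp (x * I) + ((t ^ 2 : ℝ) : ℂ) * exp (2 * x * I) : ℂ)‖
  have hf : Continuous f := by fun_prop
  obtain ⟨x₀, hx₀⟩ := exists_norm_sq_one_add_mul_exp_add_sq_mul_exp_eq ht
  have hf0 : f 0 = 1 + t + t ^ 2 := by
    have ht0 : 0 < t := by nlinarith
    simp only [f, ofReal_zero, zero_mul, mul_zero, exp_zero, mul_one]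
    exact_mod_cast Real.norm_of_nonneg (by positivity)
  have hlo' : f x₀ ≤ r := pow_le_pow_iff_left₀ (norm_nonneg _) hr two_ne_zero |>.mp (hx₀ ▸ hlo)
  exact intermediate_value_univ x₀ 0 hf ⟨hlo', hf0 ▸ hhi⟩

lemma one_add_sq_two_rpow_le_four_mul_two_rpow {σ : ℝ} (h₁ : -1 ≤ σ) (h₂ : σ ≤ 1) :
    1 + ((2 : ℝ) ^ σ) ^ 2 ≤ 4 * (2 : ℝ) ^ σ := by
  have hle : (2 : ℝ) ^ σ ≤ 2 := by
    simpa using Real.rpow_le_rpow_of_exponent_le one_le_two h₂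
  have hge : (2 : ℝ)⁻¹ ≤ (2 : ℝ) ^ σ := by
    simpa [Real.rpow_neg_one] using Real.rpow_le_rpow_of_exponent_le one_le_two h₁
  nlinarith

lemma three_rpow_le_one_add_two_rpow_add_four_rpow (σ : ℝ) :
    (3 : ℝ) ^ σ ≤ 1 + (2 : ℝ) ^ σ + (4 : ℝ) ^ σ := by
  have h2 : 0 < (2 : ℝ) ^ σ := by positivity
  have h4 : 0 < (4 : ℝ) ^ σ := by positivity
  rcases le_total σ 0 with hσ | hσ
  · linarith [Real.rpow_le_one_of_one_le_of_nonpos (by norm_num : (1 : ℝ) ≤ 3) hσ]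
  · linarith [Real.rpow_le_rpow (by norm_num : (0 : ℝ) ≤ 3) (by norm_num : (3 : ℝ) ≤ 4) hσ]

lemma four_rpow_sub_one_le_three_rpow {σ : ℝ} (h₀ : 0 ≤ σ) (h₁ : σ ≤ 1) :
    (4 : ℝ) ^ σ - 1 ≤ (3 : ℝ) ^ σ := by
  have := Real.rpow_add_le_add_rpow zero_le_one (by norm_num : (0 : ℝ) ≤ 3) h₀ h₁
  norm_num at this
  linarith

lemma one_le_mul_three_rpow_neg_point_five_five : 1 ≤ 1.9 * (3 : ℝ) ^ (-0.55 : ℝ) := by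
  have h20 : ((3 : ℝ) ^ (0.55 : ℝ)) ^ (20 : ℕ) = 3 ^ (11 : ℕ) := by
    rw [← Real.rpow_natCast, ← Real.rpow_mul (by norm_num)]
    norm_num
  have hle : (3 : ℝ) ^ (0.55 : ℝ) ≤ 1.9 :=
    le_of_pow_le_pow_left₀ (n := 20) (by norm_num) (by norm_num) (by rw [h20]; norm_num)
  rw [Real.rpow_neg (by norm_num), ← div_eq_mul_inv, le_div_iff₀ (by positivity)]
  linarith

-- `1.15 = 1.9 - 3/4`; what matters is `3/4 * 1.15 ^ 2 ≤ 1`.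
lemma one_sub_four_rpow_le {σ : ℝ} (h₀ : -0.55 ≤ σ) :
    1 - (4 : ℝ) ^ σ ≤ 1.15 * (3 : ℝ) ^ σ := by
  have h3 : 1 ≤ 1.9 * (3 : ℝ) ^ σ := one_le_mul_three_rpow_neg_point_five_five.trans <| by
    gcongr
    norm_num
  have h43 : 3 / 4 ≤ (4 / 3 : ℝ) ^ σ := by
    simpa [Real.rpow_neg_one] using
      Real.rpow_le_rpow_of_exponent_le (by norm_num : (1 : ℝ) ≤ 4 / 3) (by linarith : -1 ≤ σ)
  have h4 : (4 : ℝ) ^ σ = (4 / 3 : ℝ) ^ σ * (3 : ℝ) ^ σ := by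
    rw [← Real.mul_rpow (by norm_num) (by norm_num)]
    norm_num
  have h3pos : 0 < (3 : ℝ) ^ σ := by positivity
  nlinarith

lemma three_div_four_mul_sq_four_rpow_sub_one_le {σ : ℝ} (h₀ : -0.55 ≤ σ) (h₁ : σ ≤ 1) :
    3 / 4 * ((4 : ℝ) ^ σ - 1) ^ 2 ≤ ((3 : ℝ) ^ σ) ^ 2 := by
  rcases le_total 0 σ with hσ | hσ
  · have h1 : 1 ≤ (4 : ℝ) ^ σ := Real.one_le_rpow (by norm_num) hσ
    have := four_rpow_sub_one_le_three_rpow hσ h₁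
    nlinarith
  · have h1 : (4 : ℝ) ^ σ ≤ 1 := Real.rpow_le_one_of_one_le_of_nonpos (by norm_num) hσ
    have := one_sub_four_rpow_le h₀
    nlinarith

open Complex in
theorem stmt_12 (σ : ℝ) (hσ : σ ∈ Set.Icc (-0.55 : ℝ) 1) :
    ∃ x₁ : ℝ,
      ‖(1 + ((2 : ℝ) ^ σ : ℝ) * Complex.exp (x₁ * I)
          + ((4 : ℝ) ^ σ : ℝ) * Complex.exp (2 * x₁ * I) : ℂ)‖ = (3 : ℝ) ^ σ := by
  obtain ⟨h₀, h₁⟩ := hσ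
  have h4 : (4 : ℝ) ^ σ = ((2 : ℝ) ^ σ) ^ 2 := by
    rw [Real.rpow_pow_comm zero_le_two]
    norm_num
  rw [h4]
  refine exists_norm_one_add_mul_exp_add_sq_mul_exp_eq
    (one_add_sq_two_rpow_le_four_mul_two_rpow (by linarith) h₁) (by positivity) ?_ ?_
  · simpa [h4] using three_div_four_mul_sq_four_rpow_sub_one_le h₀ h₁
  · simpa [h4] using three_rpow_le_one_add_two_rpow_add_four_rpow σ
end

section
/- For every real σ ∈ [-0.55, 1] there exist real numbers x₁, x₂ such that 1 + 2^σ·e^{i x₁} + 3^σ·e^{i x₂} + 4^σ·e^{2 i x₁} = 0. -/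
/-!
Put `a = 2 ^ σ`. The first, second and fourth terms are `1 + z + z²` at `z = a e^{i x₁}`, whose
modulus is `1 + a + a²` at `x₁ = 0` and `√((1 - a)(1 - a³))` at `x₁ = 2π/3`, where `z = a ω` for a
primitive cube root of unity `ω`. For `σ ∈ [-0.55, 1]` the value `3 ^ σ` lies between the two, so the
intermediate value theorem gives `x₁` with `|1 + z + z²| = 3 ^ σ`, and `x₂` is chosen so that
`3 ^ σ e^{i x₂}` points in the opposite direction.
-/

lemma le_rpow_of_pow_mul_pow_le_one {b c σ : ℝ} {m n : ℕ} (hb : 1 ≤ b) (hn : n ≠ 0)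
    (h : c ^ n * b ^ m ≤ 1) (hσ : -(m / n : ℝ) ≤ σ) : c ≤ b ^ σ := by
  have hb0 : 0 < b := zero_lt_one.trans_le hb
  have hpow : (b ^ (-(m / n : ℝ))) ^ n = (b ^ m)⁻¹ := by
    rw [← Real.rpow_mul_natCast hb0.le, neg_mul, div_mul_cancel₀ _ (Nat.cast_ne_zero.2 hn),
      Real.rpow_neg hb0.le, Real.rpow_natCast]
  have hc' : c ≤ b ^ (-(m / n : ℝ)) := by
    refine le_of_pow_le_pow_left₀ hn (Real.rpow_nonneg hb0.le _) ?_
    rwa [hpow, ← one_div, le_div_iff₀ (pow_pos hb0 m)]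
  exact hc'.trans (Real.rpow_le_rpow_of_exponent_le hb hσ)

lemma three_rpow_le_one_add_two_rpow_add_sq (σ : ℝ) : (3 : ℝ) ^ σ ≤ 1 + 2 ^ σ + (2 ^ σ) ^ 2 := by
  have h2 : 0 ≤ (2 : ℝ) ^ σ := Real.rpow_nonneg zero_le_two σ
  rcases le_or_gt 0 σ with hσ | hσ
  · have h34 : (3 : ℝ) ^ σ ≤ (2 ^ σ) ^ 2 := by
      rw [Real.rpow_pow_comm zero_le_two]
      exact Real.rpow_le_rpow (by norm_num) (by norm_num) hσ
    linarith
  · have : (3 : ℝ) ^ σ ≤ 1 := Real.rpow_le_one_of_one_le_of_nonpos (by norm_num) hσ.le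
    nlinarith

lemma one_sub_two_rpow_mul_one_sub_cube_le_three_rpow_sq {σ : ℝ}
    (hσ : σ ∈ Set.Icc (-0.55 : ℝ) 1) :
    (1 - 2 ^ σ) * (1 - (2 ^ σ) ^ 3) ≤ ((3 : ℝ) ^ σ) ^ 2 := by
  obtain ⟨hσl, hσr⟩ := hσ
  rw [Real.rpow_pow_comm zero_le_three]
  rcases le_or_gt 0 σ with hσ0 | hσ0
  · have h89 : ((2 : ℝ) ^ σ) ^ 3 ≤ (3 ^ 2 : ℝ) ^ σ := by
      rw [Real.rpow_pow_comm zero_le_two]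
      exact Real.rpow_le_rpow (by norm_num) (by norm_num) hσ0
    have h1 : 1 ≤ (2 : ℝ) ^ σ := Real.one_le_rpow (by norm_num) hσ0
    have h2 : (2 : ℝ) ^ σ ≤ 2 := by
      simpa using Real.rpow_le_rpow_of_exponent_le one_le_two hσr
    have h3 : 1 ≤ ((2 : ℝ) ^ σ) ^ 3 := one_le_pow₀ h1
    nlinarith [mul_le_mul_of_nonneg_right (show (2 : ℝ) ^ σ - 1 ≤ 1 by linarith)
      (sub_nonneg.2 h3)]
  · have hσl' : -((11 : ℕ) / (20 : ℕ) : ℝ) ≤ σ := by norm_num at hσl ⊢; linarith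
    have hu : 0.68 ≤ (2 : ℝ) ^ σ :=
      le_rpow_of_pow_mul_pow_le_one one_le_two (by norm_num) (by norm_num) hσl'
    have hv : 0.29 ≤ (3 ^ 2 : ℝ) ^ σ :=
      le_rpow_of_pow_mul_pow_le_one (by norm_num) (by norm_num) (by norm_num) hσl'
    have hu1 : (2 : ℝ) ^ σ ≤ 1 := Real.rpow_le_one_of_one_le_of_nonpos one_le_two hσ0.le
    have hu3 : (0.68 : ℝ) ^ 3 ≤ ((2 : ℝ) ^ σ) ^ 3 := pow_le_pow_left₀ (by norm_num) hu 3
    have hprod : (1 - 2 ^ σ) * (1 - ((2 : ℝ) ^ σ) ^ 3) ≤ 0.32 * (1 - 0.68 ^ 3) :=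
      mul_le_mul (by linarith) (by linarith) (sub_nonneg.2 (pow_le_one₀ (by positivity) hu1))
        (by norm_num)
    norm_num at hprod hv ⊢
    linarith

namespace Complex

lemma exp_two_pi_div_three_mul_I :
    exp (↑(2 * Real.pi / 3) * I) = -1 / 2 + Real.sqrt 3 / 2 * I := by
  rw [show 2 * Real.pi / 3 = Real.pi - Real.pi / 3 by ring, exp_mul_I, ← ofReal_cos, ← ofReal_sin,
    Real.cos_pi_sub, Real.sin_pi_sub, Real.cos_pi_div_three, Real.sin_pi_div_three]
  push_cast
  ring

lemma sq_exp_eq_exp_two_mul (z : ℂ) : exp z ^ 2 = exp (2 * z) := by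
  rw [← exp_nat_mul]; norm_num

lemma sq_norm_trinomial_two_pi_div_three (a : ℝ) :
    ‖1 + a * exp (↑(2 * Real.pi / 3) * I) + a ^ 2 * exp (2 * ↑(2 * Real.pi / 3) * I)‖ ^ 2
      = (1 - a) * (1 - a ^ 3) := by
  have hsqrt : (Real.sqrt 3 : ℂ) ^ 2 = 3 := by
    exact_mod_cast Real.sq_sqrt (by norm_num : (0 : ℝ) ≤ 3)
  have hval : 1 + a * exp (↑(2 * Real.pi / 3) * I) + a ^ 2 * exp (2 * ↑(2 * Real.pi / 3) * I)
      = ((1 - a / 2 - a ^ 2 / 2 : ℝ) : ℂ) + ((Real.sqrt 3 / 2 * (a - a ^ 2) : ℝ) : ℂ) * I := by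
    rw [mul_assoc, ← sq_exp_eq_exp_two_mul, exp_two_pi_div_three_mul_I]
    push_cast
    linear_combination (-(a:ℂ) ^ 2 / 4) * hsqrt + ((a:ℂ) ^ 2 * (Real.sqrt 3 : ℂ) ^ 2 / 4) * I_sq
  rw [hval, Complex.sq_norm, normSq_add_mul_I]
  nlinarith [Real.sq_sqrt (by norm_num : (0:ℝ) ≤ 3)]

lemma norm_trinomial_zero {a : ℝ} (ha : 0 ≤ a) :
    ‖1 + a * exp (↑(0:ℝ) * I) + a ^ 2 * exp (2 * ↑(0:ℝ) * I)‖ = 1 + a + a ^ 2 := by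
  simp only [ofReal_zero, zero_mul, mul_zero, exp_zero, mul_one]
  exact_mod_cast abs_of_nonneg (by positivity : 0 ≤ 1 + a + a ^ 2)

lemma exists_norm_trinomial_eq {a b : ℝ} (ha : 0 ≤ a) (hb : 0 ≤ b)
    (hlow : (1 - a) * (1 - a ^ 3) ≤ b ^ 2) (hhigh : b ≤ 1 + a + a ^ 2) :
    ∃ x : ℝ, ‖1 + a * exp (x * I) + a ^ 2 * exp (2 * x * I)‖ = b := by
  have hcont : Continuous fun x : ℝ => ‖1 + a * exp (x * I) + a ^ 2 * exp (2 * x * I)‖ := by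
    fun_prop
  have hleft :
      ‖1 + a * exp (↑(2 * Real.pi / 3) * I) + a ^ 2 * exp (2 * ↑(2 * Real.pi / 3) * I)‖ ≤ b :=
    pow_le_pow_iff_left₀ (norm_nonneg _) hb two_ne_zero |>.1
      ((sq_norm_trinomial_two_pi_div_three a).trans_le hlow)
  obtain ⟨x, -, hx⟩ := intermediate_value_uIcc (a := 2 * Real.pi / 3) (b := 0) hcont.continuousOn
    ⟨hleft.trans' inf_le_left, by rw [norm_trinomial_zero ha]; exact hhigh.trans le_sup_right⟩
  exact ⟨x, hx⟩

lemma exists_add_mul_exp_eq_zero (w : ℂ) : ∃ y : ℝ, w + ‖w‖ * exp (y * I) = 0 :=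
  ⟨arg (-w), by rw [← norm_neg w, norm_mul_exp_arg_mul_I, add_neg_cancel]⟩

end Complex

open Complex in
theorem stmt_13 (σ : ℝ) (hσ : σ ∈ Set.Icc (-0.55 : ℝ) 1) :
    ∃ x₁ x₂ : ℝ,
      1 + ((2 : ℝ) ^ σ : ℝ) * Complex.exp (x₁ * I)
        + ((3 : ℝ) ^ σ : ℝ) * Complex.exp (x₂ * I)
        + ((4 : ℝ) ^ σ : ℝ) * Complex.exp (2 * x₁ * I) = 0 := by
  obtain ⟨x₁, hx₁⟩ := exists_norm_trinomial_eq (Real.rpow_nonneg zero_le_two σ)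
    (Real.rpow_nonneg zero_le_three σ) (one_sub_two_rpow_mul_one_sub_cube_le_three_rpow_sq hσ)
    (three_rpow_le_one_add_two_rpow_add_sq σ)
  obtain ⟨x₂, hx₂⟩ := exists_add_mul_exp_eq_zero
    (1 + ((2 : ℝ) ^ σ : ℝ) * exp (x₁ * I) + (((2 : ℝ) ^ σ : ℝ) : ℂ) ^ 2 * exp (2 * x₁ * I))
  rw [hx₁] at hx₂
  have h4 : (4 : ℝ) ^ σ = ((2 : ℝ) ^ σ) ^ 2 := by
    rw [Real.rpow_pow_comm zero_le_two]; norm_num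
  refine ⟨x₁, x₂, ?_⟩
  rw [h4, ofReal_pow]
  linear_combination hx₂
end

section
/- Let f be a non-constant entire function and k > 0. Then there exists z₀ ∈ ℂ with |f(z₀)| = k and f'(z₀) ≠ 0. -/
/-!
By Liouville's theorem, applied to `f` and to `1 / f`, the modulus `|f|` takes values both below
and above `k`, so by connectedness `f` takes some value `w₀` with `|w₀| = k`. By the open mapping
theorem the range of `f` contains a whole arc of the circle `|w| = k` around `w₀`, and such an arc
is uncountable. The critical points of `f` are the zeros of the entire function `f' ≢ 0`, a
discrete and hence countable set, so some point of the arc is not a critical value; any preimage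
of it is the required `z₀`.
-/

open Set Complex

theorem AnalyticOnNhd.countable_zeroSet {E : Type*} [NormedAddCommGroup E] [NormedSpace ℂ E]
    {g : ℂ → E} (hg : AnalyticOnNhd ℂ g univ) (hne : ∃ z, g z ≠ 0) :
    {z | g z = 0}.Countable := by
  refine (HereditarilyLindelofSpace.isLindelof _).countable_of_isDiscrete ?_
  rcases hg.eqOn_zero_or_eventually_ne_zero_of_preconnected isPreconnected_univ with h | h
  · obtain ⟨z, hz⟩ := hne
    exact absurd (h (mem_univ z)) hz
  · exact (compl_mem_codiscrete_iff.mp h).2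

theorem IsOpen.exists_norm_eq_notMem_of_countable {V C : Set ℂ} (hV : IsOpen V) {w₀ : ℂ}
    (hw₀ : w₀ ∈ V) (h0 : w₀ ≠ 0) (hC : C.Countable) : ∃ w ∈ V, ‖w‖ = ‖w₀‖ ∧ w ∉ C := by
  -- On `(-π, π)` the arc `θ ↦ w₀ exp (iθ)` is inverted by `w ↦ arg (w / w₀)`, so it can meet `C`
  -- only at the countably many parameters `arg (c / w₀)`, `c ∈ C`.
  set γ : ℝ → ℂ := fun θ => w₀ * exp (θ * I)
  have hγ : Continuous γ := by fun_prop
  have hopen : IsOpen (γ ⁻¹' V ∩ Ioo (-Real.pi) Real.pi) := (hV.preimage hγ).inter isOpen_Ioo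
  have hzero : (0 : ℝ) ∈ γ ⁻¹' V ∩ Ioo (-Real.pi) Real.pi :=
    ⟨by simpa [γ] using hw₀, neg_lt_zero.mpr Real.pi_pos, Real.pi_pos⟩
  obtain ⟨θ, ⟨hθV, hθπ⟩, hθC⟩ :=
    ((hC.image fun c => arg (c / w₀)).dense_compl ℝ).inter_open_nonempty _ hopen ⟨0, hzero⟩
  refine ⟨γ θ, hθV, by simp [γ], fun hmem => hθC ⟨_, hmem, ?_⟩⟩
  have hθ : θ ∈ Ioc (-Real.pi) (-Real.pi + 2 * Real.pi) := ⟨hθπ.1, by linarith [hθπ.2]⟩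
  simp only [γ, mul_div_cancel_left₀ _ h0, arg_exp_mul_I, toIocMod_eq_self, hθ]

section Liouville

variable {E F : Type*} [NormedAddCommGroup E] [NormedSpace ℂ E] [NormedAddCommGroup F]
  [NormedSpace ℂ F]

theorem Differentiable.exists_lt_norm {f : E → F} (hf : Differentiable ℂ f)
    (hnc : ¬ ∃ c, f = fun _ => c) (k : ℝ) : ∃ z, k < ‖f z‖ := by
  by_contra! h
  refine hnc (hf.exists_eq_const_of_bounded ?_)
  exact isBounded_iff_forall_norm_le.mpr ⟨k, forall_mem_range.mpr h⟩

theorem Differentiable.exists_norm_lt {f : E → ℂ} (hf : Differentiable ℂ f)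
    (hnc : ¬ ∃ c, f = fun _ => c) {k : ℝ} (hk : 0 < k) : ∃ z, ‖f z‖ < k := by
  by_contra! h
  have hf0 (z : E) : f z ≠ 0 := fun hz => by simpa [hz] using hk.trans_le (h z)
  obtain ⟨c, hc⟩ := (hf.inv hf0).exists_eq_const_of_bounded <|
    isBounded_iff_forall_norm_le.mpr ⟨k⁻¹, forall_mem_range.mpr fun z => by
      simpa only [Pi.inv_apply, norm_inv] using inv_anti₀ hk (h z)⟩
  exact hnc ⟨c⁻¹, funext fun z => inv_eq_iff_eq_inv.mp (congrFun hc z)⟩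

theorem Differentiable.exists_norm_eq {f : E → ℂ} (hf : Differentiable ℂ f)
    (hnc : ¬ ∃ c, f = fun _ => c) {k : ℝ} (hk : 0 < k) : ∃ z, ‖f z‖ = k := by
  obtain ⟨a, ha⟩ := hf.exists_norm_lt hnc hk
  obtain ⟨b, hb⟩ := hf.exists_lt_norm hnc k
  exact isPreconnected_univ.intermediate_value (mem_univ a) (mem_univ b)
    hf.continuous.norm.continuousOn ⟨ha.le, hb.le⟩ |>.imp fun _ h => h.2

end Liouville

theorem stmt_17 (f : ℂ → ℂ) (hf : Differentiable ℂ f)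
    (hnc : ¬ ∃ c : ℂ, f = fun _ => c) (k : ℝ) (hk : 0 < k) :
    ∃ z₀ : ℂ, ‖f z₀‖ = k ∧ deriv f z₀ ≠ 0 := by
  have hfa : AnalyticOnNhd ℂ f univ := fun z _ => hf.analyticAt z
  have hcrit : {z | deriv f z = 0}.Countable := by
    refine hfa.deriv.countable_zeroSet ?_
    by_contra! h
    exact hnc ⟨f 0, funext fun z => is_const_of_deriv_eq_zero hf h z 0⟩
  have hopen : IsOpen (range f) := by
    refine (hfa.is_constant_or_isOpenMap.resolve_left ?_).isOpen_range
    rintro ⟨c, hc⟩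
    exact hnc ⟨c, funext hc⟩
  obtain ⟨z₁, hz₁⟩ := hf.exists_norm_eq hnc hk
  have hz₁0 : f z₁ ≠ 0 := norm_pos_iff.mp (hz₁ ▸ hk)
  obtain ⟨_, ⟨z₀, rfl⟩, hnorm, hz₀⟩ :=
    hopen.exists_norm_eq_notMem_of_countable (mem_range_self z₁) hz₁0 (hcrit.image f)
  exact ⟨z₀, hnorm.trans hz₁, fun h => hz₀ (mem_image_of_mem f h)⟩
end

section
/- Let n > 2 be a prime number. Define f(x) = 1 + 2^x + ... + (n-1)^x, g(x) = ∑_{m=2}^{n-1} (log m / log n)·m^x, and h(x) = n^x for real x, and set b_{n,1} := sup{x : f(x) = h(x)}, b'_{n,1} := sup{x : g(x) = h(x)}. Then b'_{n,1} < b_{n,1}. -/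
/-!
Dividing by `n ^ x` turns both equations into `Φ x = 1`, where `Φ` is a sum of positive multiples
of powers `(m / n) ^ x` with bases in `(0, 1)`. Such a `Φ` is continuous, strictly decreasing and
runs from `+∞` down to `0`, so each solution set is a single point. Since `log m / log n < 1`, the
sum coming from `g` lies strictly below the one coming from `f` at every `x`, so its root lies to
the left of the root of the other.
-/

open Real Filter Set Topology

section SumMulRpow

variable {ι : Type*} {s : Finset ι} {c a b : ι → ℝ}

theorem continuous_sum_mul_rpow (hb : ∀ i ∈ s, 0 < b i) :
    Continuous fun x : ℝ => ∑ i ∈ s, c i * b i ^ x :=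
  continuous_finsetSum _ fun i hi => continuous_const.mul <|
    continuous_const.rpow continuous_id fun _ => Or.inl (hb i hi).ne'

theorem strictAnti_sum_mul_rpow (hs : s.Nonempty) (hc : ∀ i ∈ s, 0 < c i)
    (hb : ∀ i ∈ s, b i ∈ Ioo 0 1) : StrictAnti fun x : ℝ => ∑ i ∈ s, c i * b i ^ x :=
  fun _ _ hxy => Finset.sum_lt_sum_of_nonempty hs fun i hi =>
    mul_lt_mul_of_pos_left (rpow_lt_rpow_of_exponent_gt (hb i hi).1 (hb i hi).2 hxy) (hc i hi)

theorem tendsto_sum_mul_rpow_atTop (hb : ∀ i ∈ s, b i ∈ Ioo 0 1) :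
    Tendsto (fun x : ℝ => ∑ i ∈ s, c i * b i ^ x) atTop (𝓝 0) := by
  simpa using tendsto_finsetSum s fun i hi =>
    (tendsto_rpow_atTop_of_base_lt_one _ (by linarith [(hb i hi).1]) (hb i hi).2).const_mul (c i)

theorem tendsto_sum_mul_rpow_atBot (hs : s.Nonempty) (hc : ∀ i ∈ s, 0 < c i)
    (hb : ∀ i ∈ s, b i ∈ Ioo 0 1) :
    Tendsto (fun x : ℝ => ∑ i ∈ s, c i * b i ^ x) atBot atTop := by
  obtain ⟨j, hj⟩ := hs
  refine tendsto_atTop_mono (fun x => ?_) <|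
    (tendsto_rpow_atBot_of_base_lt_one _ (hb j hj).1 (hb j hj).2).const_mul_atTop (hc j hj)
  exact Finset.single_le_sum (f := fun i => c i * b i ^ x)
    (fun i hi => (mul_pos (hc i hi) (rpow_pos_of_pos (hb i hi).1 x)).le) hj

theorem existsUnique_sum_mul_rpow_eq (hs : s.Nonempty) (hc : ∀ i ∈ s, 0 < c i)
    (hb : ∀ i ∈ s, b i ∈ Ioo 0 1) {y : ℝ} (hy : 0 < y) :
    ∃! x : ℝ, ∑ i ∈ s, c i * b i ^ x = y := by
  obtain ⟨x, hx⟩ := mem_range_of_exists_le_of_exists_ge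
    (continuous_sum_mul_rpow fun i hi => (hb i hi).1)
    ((tendsto_sum_mul_rpow_atTop hb).eventually (ge_mem_nhds hy)).exists
    ((tendsto_sum_mul_rpow_atBot hs hc hb).eventually_ge_atTop y).exists
  exact ⟨x, hx, fun x' hx' => (strictAnti_sum_mul_rpow hs hc hb).injective (hx'.trans hx.symm)⟩

theorem sum_mul_rpow_eq_rpow_iff {N x : ℝ} (hN : 0 < N) (ha : ∀ i ∈ s, 0 ≤ a i) :
    ∑ i ∈ s, c i * a i ^ x = N ^ x ↔ ∑ i ∈ s, c i * (a i / N) ^ x = 1 := by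
  rw [← div_eq_one_iff_eq (rpow_pos_of_pos hN x).ne', Finset.sum_div]
  refine Eq.congr_left (Finset.sum_congr rfl fun i hi => ?_)
  rw [div_rpow (ha i hi) hN.le, mul_div_assoc]

theorem setOf_sum_mul_rpow_eq_rpow_eq_singleton {N r : ℝ} (hs : s.Nonempty)
    (hc : ∀ i ∈ s, 0 < c i) (hN : 0 < N) (hb : ∀ i ∈ s, a i / N ∈ Ioo 0 1)
    (hr : ∑ i ∈ s, c i * (a i / N) ^ r = 1) :
    {x : ℝ | ∑ i ∈ s, c i * a i ^ x = N ^ x} = {r} := by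
  ext x
  rw [mem_ofPred_eq, mem_singleton_iff,
    sum_mul_rpow_eq_rpow_iff hN fun i hi => ((div_pos_iff_of_pos_right hN).mp (hb i hi).1).le]
  exact ⟨fun hx => (strictAnti_sum_mul_rpow hs hc hb).injective (hx.trans hr.symm),
    fun hx => hx ▸ hr⟩

theorem sum_mul_rpow_lt_sum_rpow_of_subset {t : Finset ι} (hts : t ⊆ s) (ht : t.Nonempty)
    (hc : ∀ i ∈ t, c i < 1) (hb : ∀ i ∈ s, 0 < b i) (x : ℝ) :
    ∑ i ∈ t, c i * b i ^ x < ∑ i ∈ s, 1 * b i ^ x :=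
  calc ∑ i ∈ t, c i * b i ^ x
      < ∑ i ∈ t, 1 * b i ^ x := Finset.sum_lt_sum_of_nonempty ht fun i hi =>
        mul_lt_mul_of_pos_right (hc i hi) (rpow_pos_of_pos (hb i (hts hi)) x)
    _ ≤ ∑ i ∈ s, 1 * b i ^ x := Finset.sum_le_sum_of_subset_of_nonneg hts fun i hi _ => by
        simpa using (rpow_pos_of_pos (hb i hi) x).le

end SumMulRpow

theorem natCast_div_mem_Ioo {m n : ℕ} (hm : 0 < m) (hmn : m < n) :
    (m : ℝ) / n ∈ Ioo 0 1 := by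
  have hn : (0 : ℝ) < n := by exact_mod_cast hm.trans hmn
  exact ⟨div_pos (by exact_mod_cast hm) hn, (div_lt_one hn).mpr (by exact_mod_cast hmn)⟩

theorem log_div_log_mem_Ioo {u v : ℝ} (hu : 1 < u) (huv : u < v) :
    log u / log v ∈ Ioo 0 1 :=
  ⟨div_pos (log_pos hu) (log_pos (hu.trans huv)),
    (div_lt_one (log_pos (hu.trans huv))).mpr (log_lt_log (by linarith) huv)⟩

theorem stmt_18_general (n : ℕ) (hn : 2 < n) :
    sSup {x : ℝ | (∑ m ∈ Finset.Icc 2 (n - 1),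
        (Real.log m / Real.log n) * (m : ℝ) ^ x) = (n : ℝ) ^ x} <
    sSup {x : ℝ | (∑ m ∈ Finset.Icc 1 (n - 1), (m : ℝ) ^ x) = (n : ℝ) ^ x} := by
  set s₁ := Finset.Icc 1 (n - 1)
  set s₂ := Finset.Icc 2 (n - 1)
  have hN : (0 : ℝ) < n := by positivity
  have hsub : s₂ ⊆ s₁ := Finset.Icc_subset_Icc_left one_le_two
  have hne₂ : s₂.Nonempty := Finset.nonempty_Icc.mpr (by omega)
  have hne₁ : s₁.Nonempty := hne₂.mono hsub
  have hb₁ : ∀ m ∈ s₁, (m : ℝ) / n ∈ Ioo 0 1 := fun m hm => by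
    rw [Finset.mem_Icc] at hm
    exact natCast_div_mem_Ioo (by omega) (by omega)
  have hb₂ : ∀ m ∈ s₂, (m : ℝ) / n ∈ Ioo 0 1 := fun m hm => hb₁ m (hsub hm)
  have hw : ∀ m ∈ s₂, log m / log n ∈ Ioo 0 1 := fun m hm => by
    rw [Finset.mem_Icc] at hm
    exact log_div_log_mem_Ioo (by exact_mod_cast (by omega : 1 < m))
      (by exact_mod_cast (by omega : m < n))
  obtain ⟨r, hr, -⟩ := existsUnique_sum_mul_rpow_eq hne₁ (fun _ _ => one_pos) hb₁ one_pos
  obtain ⟨r', hr', -⟩ :=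
    existsUnique_sum_mul_rpow_eq hne₂ (fun m hm => (hw m hm).1) hb₂ one_pos
  have hf : {x : ℝ | ∑ m ∈ s₁, (m : ℝ) ^ x = (n : ℝ) ^ x} =
      {x : ℝ | ∑ m ∈ s₁, 1 * (m : ℝ) ^ x = (n : ℝ) ^ x} := by
    simp only [one_mul]
  rw [hf, setOf_sum_mul_rpow_eq_rpow_eq_singleton hne₁ (fun _ _ => one_pos) hN hb₁ hr,
    setOf_sum_mul_rpow_eq_rpow_eq_singleton hne₂ (fun m hm => (hw m hm).1) hN hb₂ hr',
    csSup_singleton, csSup_singleton]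
  refine (strictAnti_sum_mul_rpow hne₁ (fun _ _ => one_pos) hb₁).lt_iff_gt.mp ?_
  calc ∑ m ∈ s₁, 1 * ((m : ℝ) / n) ^ r
      = ∑ m ∈ s₂, log m / log n * ((m : ℝ) / n) ^ r' := hr.trans hr'.symm
    _ < ∑ m ∈ s₁, 1 * ((m : ℝ) / n) ^ r' :=
      sum_mul_rpow_lt_sum_rpow_of_subset hsub hne₂ (fun m hm => (hw m hm).2)
        (fun m hm => (hb₁ m hm).1) r'

theorem stmt_18 (n : ℕ) (hn : 2 < n) (hp : Nat.Prime n) :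
    sSup {x : ℝ | (∑ m ∈ Finset.Icc 2 (n - 1),
        (Real.log m / Real.log n) * (m : ℝ) ^ x) = (n : ℝ) ^ x} <
    sSup {x : ℝ | (∑ m ∈ Finset.Icc 1 (n - 1), (m : ℝ) ^ x) = (n : ℝ) ^ x} :=
  stmt_18_general n hn
end

section
/- Let n ≥ 2 and let b_{n,1} := sup{x ∈ ℝ : ∑_{m=1}^{n-1} m^x = n^x}. Then for every complex z with Re z > b_{n,1}, G_n(z) := ∑_{m=1}^{n} m^z ≠ 0. -/
/-!
The function `t ↦ ∑_{1 ≤ m < n} (m/n)^t` is continuous and strictly decreasing, from `n - 1 ≥ 1`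
at `t = 0` to `0` at infinity, so `∑_{1 ≤ m < n} m^x = n^x` has exactly one real solution `b`,
and `∑_{1 ≤ m < n} m^x < n^x` for `x > b`. For `Re z > b` the last term of `G_n(z)` then strictly
dominates the others in absolute value, since `|m^z| = m^(Re z)`.
-/

open Real Finset Filter Topology

section SumRpow

variable {ι : Type*} {s : Finset ι} {a : ι → ℝ}

theorem sum_div_rpow {c : ℝ} (hc : 0 < c) (ha : ∀ i ∈ s, 0 ≤ a i) (t : ℝ) :
    ∑ i ∈ s, (a i / c) ^ t = (∑ i ∈ s, a i ^ t) / c ^ t := by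
  rw [sum_div]
  exact sum_congr rfl fun i hi => div_rpow (ha i hi) hc.le t

theorem strictAnti_sum_rpow (hs : s.Nonempty) (ha : ∀ i ∈ s, 0 < a i ∧ a i < 1) :
    StrictAnti fun t : ℝ => ∑ i ∈ s, a i ^ t := fun _ _ hab =>
  sum_lt_sum_of_nonempty hs fun i hi => rpow_lt_rpow_of_exponent_gt (ha i hi).1 (ha i hi).2 hab

theorem continuous_sum_rpow (ha : ∀ i ∈ s, 0 < a i) :
    Continuous fun t : ℝ => ∑ i ∈ s, a i ^ t :=
  continuous_finsetSum _ fun i hi =>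
    continuous_const.rpow continuous_id fun _ => Or.inl (ha i hi).ne'

theorem tendsto_sum_rpow_atTop (ha : ∀ i ∈ s, 0 < a i ∧ a i < 1) :
    Tendsto (fun t : ℝ => ∑ i ∈ s, a i ^ t) atTop (𝓝 0) := by
  simpa using tendsto_finsetSum s fun i hi =>
    tendsto_rpow_atTop_of_base_lt_one _ (by linarith [(ha i hi).1]) (ha i hi).2

theorem one_mem_range_sum_rpow (hs : s.Nonempty) (ha : ∀ i ∈ s, 0 < a i ∧ a i < 1) :
    1 ∈ Set.range fun t : ℝ => ∑ i ∈ s, a i ^ t := by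
  obtain ⟨t, ht⟩ := ((tendsto_sum_rpow_atTop ha).eventually (eventually_lt_nhds one_pos)).exists
  have h0 : 1 ≤ ∑ i ∈ s, a i ^ (0 : ℝ) := by
    simpa [Nat.one_le_iff_ne_zero] using hs.ne_empty
  exact intermediate_value_univ t 0 (continuous_sum_rpow fun i hi => (ha i hi).1) ⟨ht.le, h0⟩

theorem sum_rpow_lt_one_of_sSup_lt (hs : s.Nonempty) (ha : ∀ i ∈ s, 0 < a i ∧ a i < 1) {x : ℝ}
    (hx : sSup {t | ∑ i ∈ s, a i ^ t = 1} < x) : ∑ i ∈ s, a i ^ x < 1 := by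
  obtain ⟨b, hb⟩ := one_mem_range_sum_rpow hs ha
  have hanti := strictAnti_sum_rpow hs ha
  have hsol : {t | ∑ i ∈ s, a i ^ t = 1} = {b} :=
    Set.eq_singleton_iff_unique_mem.2 ⟨hb, fun t (ht : _ = _) => hanti.injective (ht.trans hb.symm)⟩
  rw [hsol, csSup_singleton] at hx
  exact hb ▸ hanti hx

end SumRpow

theorem sum_cpow_add_cpow_ne_zero {ι : Type*} {s : Finset ι} {a : ι → ℝ} {c : ℝ}
    (ha : ∀ i ∈ s, 0 < a i) (hc : 0 < c) {z : ℂ} (h : ∑ i ∈ s, a i ^ z.re < c ^ z.re) :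
    ∑ i ∈ s, (a i : ℂ) ^ z + (c : ℂ) ^ z ≠ 0 := by
  intro h0
  have hle : ‖(c : ℂ) ^ z‖ ≤ ∑ i ∈ s, ‖(a i : ℂ) ^ z‖ := by
    rw [eq_neg_of_add_eq_zero_right h0, norm_neg]
    exact norm_sum_le _ _
  rw [Complex.norm_cpow_eq_rpow_re_of_pos hc,
    sum_congr rfl fun i hi => Complex.norm_cpow_eq_rpow_re_of_pos (ha i hi) z] at hle
  linarith

theorem stmt_19 (n : ℕ) (hn : 2 ≤ n) (z : ℂ)
    (hz : sSup {x : ℝ | (∑ m ∈ Finset.Icc 1 (n - 1), (m : ℝ) ^ x) = (n : ℝ) ^ x} < z.re) :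
    (∑ m ∈ Finset.Icc 1 n, (m : ℂ) ^ z) ≠ 0 := by
  have hn0 : (0 : ℝ) < n := Nat.cast_pos.2 (by omega)
  have hs : (Icc 1 (n - 1)).Nonempty := ⟨1, mem_Icc.2 ⟨le_rfl, by omega⟩⟩
  have hpos : ∀ m ∈ Icc 1 (n - 1), (0 : ℝ) < m := fun m hm =>
    Nat.cast_pos.2 (mem_Icc.1 hm).1
  have hratio : ∀ m ∈ Icc 1 (n - 1), 0 < (m : ℝ) / n ∧ (m : ℝ) / n < 1 := fun m hm =>
    ⟨div_pos (hpos m hm) hn0, (div_lt_one hn0).2 (by have := (mem_Icc.1 hm).2; norm_cast; omega)⟩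
  have hsum_div := sum_div_rpow hn0 fun m hm => (hpos m hm).le
  have hlt : ∑ m ∈ Icc 1 (n - 1), (m : ℝ) ^ z.re < (n : ℝ) ^ z.re := by
    rw [← div_lt_one (rpow_pos_of_pos hn0 _), ← hsum_div]
    refine sum_rpow_lt_one_of_sSup_lt hs hratio ?_
    simpa only [hsum_div, div_eq_one_iff_eq (rpow_pos_of_pos hn0 _).ne'] using hz
  have hsplit : ∑ m ∈ Icc 1 n, (m : ℂ) ^ z
      = ∑ m ∈ Icc 1 (n - 1), ((m : ℝ) : ℂ) ^ z + ((n : ℝ) : ℂ) ^ z := by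
    obtain ⟨k, rfl⟩ : ∃ k, n = k + 1 := ⟨n - 1, by omega⟩
    rw [sum_Icc_succ_top (by omega)]
    simp
  rw [hsplit]
  exact sum_cpow_add_cpow_ne_zero hpos hn0 hlt
end
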